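/- With A as above and c = 1, the centre of A is exactly the 2-dimensional span of 1 and z = xy − s. In particular, the centre of A contains no element of multiplicative order 4 over ℚ (every central unit squared is a nonnegative rational multiple of 1 plus z-component with z² = 1; concretely, (α + βz)² = (α² + β²)·1 + 2αβ·z, so no central element w satisfies w² = −1). -/

import Mathlib

/-
The monomials `x^a y^b s^c` (`a, b, c ∈ {0, 1}`) span `A`, since the relations let one reorder any
word into this form. The representation sending `x`, `y`, `s` to explicit pairs of `2 × 2` matrices
maps them to a basis of `M₂(ℚ) × M₂(ℚ)`, so it is an isomorphism `A ≃ M₂(ℚ) × M₂(ℚ)`. The centre of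
the right-hand side consists of the pairs of scalar matrices, and `z ↦ (1, -1)`; hence the centre
of `A` is `ℚ 1 + ℚ z ≅ ℚ × ℚ`, where squares are nonnegative in each coordinate: no square is `-1`,
and `u ^ 4 = 1` forces `u ^ 2 = 1`.
-/

open FreeAlgebra

/-- Generators of the presented algebra: `0 ↦ y`, `1 ↦ s`, `2 ↦ x`. -/
noncomputable abbrev RRCAgen : Fin 3 → FreeAlgebra ℚ (Fin 3) := FreeAlgebra.ι ℚ

/-- The defining relations of the 8-dimensional algebra `H̄₁(G(2,1,1))`:
`s² = 1, sx = −xs, ys = −sy, yx = xy − 2s, x² = 0, y² = 0`. -/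
inductive RRCArel : FreeAlgebra ℚ (Fin 3) → FreeAlgebra ℚ (Fin 3) → Prop
  | s_sq : RRCArel (RRCAgen 1 * RRCAgen 1) 1
  | sx : RRCArel (RRCAgen 1 * RRCAgen 2) (-(RRCAgen 2 * RRCAgen 1))
  | ys : RRCArel (RRCAgen 0 * RRCAgen 1) (-(RRCAgen 1 * RRCAgen 0))
  | yx : RRCArel (RRCAgen 0 * RRCAgen 2) (RRCAgen 2 * RRCAgen 0 - (2 : ℚ) • RRCAgen 1)
  | x_sq : RRCArel (RRCAgen 2 * RRCAgen 2) 0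
  | y_sq : RRCArel (RRCAgen 0 * RRCAgen 0) 0

/-- The restricted rational Cherednik algebra `A = H̄₁(G(2,1,1))` over `ℚ`. -/
noncomputable abbrev RRCA := RingQuot RRCArel

/-- The central element `z = xy − s` of `A`. -/
noncomputable def RRCAz : RRCA :=
  RingQuot.mkAlgHom ℚ RRCArel (RRCAgen 2 * RRCAgen 0 - RRCAgen 1)

theorem Submodule.eq_top_of_one_mem_of_mul_mem {R A : Type*} [CommSemiring R] [Semiring A]
    [Algebra R A] {s : Set A} (hs : Algebra.adjoin R s = ⊤) {p : Submodule R A} (h1 : 1 ∈ p)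
    (hmul : ∀ a ∈ s, ∀ b ∈ p, a * b ∈ p) : p = ⊤ := by
  suffices h : ∀ a ∈ Algebra.adjoin R s, ∀ b ∈ p, a * b ∈ p from
    eq_top_iff.2 fun a _ => mul_one a ▸ h a (hs ▸ Algebra.mem_top) 1 h1
  intro a ha
  induction ha using Algebra.adjoin_induction with
  | mem a ha => exact hmul a ha
  | algebraMap r => exact fun b hb => Algebra.smul_def r b ▸ p.smul_mem r hb
  | add a c _ _ iha ihc => exact fun b hb => (add_mul a c b).symm ▸ p.add_mem (iha b hb) (ihc b hb)
  | mul a c _ _ iha ihc => exact fun b hb => (mul_assoc a c b).symm ▸ iha _ (ihc b hb)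

theorem LinearMap.injective_of_linearIndependent_comp {R M N ι : Type*} [Semiring R]
    [AddCommMonoid M] [AddCommMonoid N] [Module R M] [Module R N] (f : M →ₗ[R] N) {v : ι → M}
    (hv : Submodule.span R (Set.range v) = ⊤) (hfv : LinearIndependent R (f ∘ v)) :
    Function.Injective f := by
  have hsurj : Function.Surjective (Finsupp.linearCombination R v) := by
    rw [← LinearMap.range_eq_top, Finsupp.range_linearCombination, hv]
  refine Function.Injective.of_comp_right ?_ hsurj
  have hcomp : f ∘ Finsupp.linearCombination R v = Finsupp.linearCombination R (f ∘ v) :=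
    funext (Finsupp.apply_linearCombination R f v)
  rwa [hcomp]

theorem Matrix.mem_center_prod_iff {n K : Type*} [Fintype n] [DecidableEq n] [CommSemiring K]
    {p : Matrix n n K × Matrix n n K} :
    p ∈ Set.center (Matrix n n K × Matrix n n K) ↔ ∃ a b : K, p = (scalar n a, scalar n b) := by
  simp [Set.center_prod, Prod.ext_iff, eq_comm]

theorem sq_eq_one_of_pow_four_eq_one {R : Type*} [Ring R] [LinearOrder R] [IsStrictOrderedRing R]
    {a : R} (h : a ^ 4 = 1) : a ^ 2 = 1 :=
  (pow_eq_one_iff_of_nonneg (sq_nonneg a) two_ne_zero).1 (by rwa [← pow_mul])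

namespace RRCA

structure SatisfiesRelations {R : Type*} [Ring R] [Algebra ℚ R] (x y s : R) : Prop where
  s_mul_s : s * s = 1
  s_mul_x : s * x = -(x * s)
  s_mul_y : s * y = -(y * s)
  y_mul_x : y * x = x * y - (2 : ℚ) • s
  x_mul_x : x * x = 0
  y_mul_y : y * y = 0

def monomials {R : Type*} [Mul R] [One R] (x y s : R) : Fin 8 → R :=
  ![1, s, y, y * s, x, x * s, x * y, x * y * s]

theorem SatisfiesRelations.span_monomials {R : Type*} [Ring R] [Algebra ℚ R] {x y s : R}
    (h : SatisfiesRelations x y s) (hgen : Algebra.adjoin ℚ {x, y, s} = ⊤) :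
    Submodule.span ℚ (Set.range (monomials x y s)) = ⊤ := by
  set P := Submodule.span ℚ (Set.range (monomials x y s))
  have hmem : ∀ i, monomials x y s i ∈ P := fun i => Submodule.subset_span ⟨i, rfl⟩
  simp only [Fin.forall_fin_succ, monomials, Matrix.cons_val_zero, Matrix.cons_val_succ,
    IsEmpty.forall_iff, and_true, mul_assoc] at hmem
  refine Submodule.eq_top_of_one_mem_of_mul_mem hgen hmem.1 ?_
  have assoc {a b c : R} (hab : a * b = c) (t : R) : a * (b * t) = c * t := by
    rw [← mul_assoc, hab]
  rintro g hg b hb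
  induction hb using Submodule.span_induction with
  | mem u hu =>
    obtain ⟨i, rfl⟩ := hu
    simp only [Set.mem_insert_iff, Set.mem_singleton_iff] at hg
    rcases hg with rfl | rfl | rfl <;> fin_cases i <;>
      simp [monomials, mul_assoc, h.s_mul_s, h.s_mul_x, h.s_mul_y, h.y_mul_x, h.x_mul_x,
        h.y_mul_y, assoc h.s_mul_x, assoc h.s_mul_y, assoc h.y_mul_x, assoc h.x_mul_x,
        assoc h.y_mul_y, sub_mul, sub_mem, hmem]
  | zero => simp
  | add u v _ _ hu hv => rw [mul_add]; exact add_mem hu hv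
  | smul c u _ hu => rw [mul_smul_comm]; exact Submodule.smul_mem _ _ hu

noncomputable def x : RRCA := RingQuot.mkAlgHom ℚ RRCArel (RRCAgen 2)
noncomputable def y : RRCA := RingQuot.mkAlgHom ℚ RRCArel (RRCAgen 0)
noncomputable def s : RRCA := RingQuot.mkAlgHom ℚ RRCArel (RRCAgen 1)

theorem satisfiesRelations : SatisfiesRelations x y s where
  s_mul_s := by simpa [x, y, s] using RingQuot.mkAlgHom_rel ℚ RRCArel.s_sq
  s_mul_x := by simpa [x, y, s] using RingQuot.mkAlgHom_rel ℚ RRCArel.sx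
  s_mul_y := neg_eq_iff_eq_neg.1 <| by
    simpa [x, y, s] using (RingQuot.mkAlgHom_rel ℚ RRCArel.ys).symm
  y_mul_x := by simpa [x, y, s] using RingQuot.mkAlgHom_rel ℚ RRCArel.yx
  x_mul_x := by simpa [x, y, s] using RingQuot.mkAlgHom_rel ℚ RRCArel.x_sq
  y_mul_y := by simpa [x, y, s] using RingQuot.mkAlgHom_rel ℚ RRCArel.y_sq

theorem adjoin_generators : Algebra.adjoin ℚ {x, y, s} = ⊤ := by
  have h : {x, y, s} = RingQuot.mkAlgHom ℚ RRCArel '' Set.range (FreeAlgebra.ι ℚ) := by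
    rw [← Set.range_comp]
    ext a
    simp only [x, y, s, Set.mem_insert_iff, Set.mem_singleton_iff, Set.mem_range,
      Function.comp_apply, eq_comm, Fin.exists_fin_succ, Fin.succ_zero_eq_one, Fin.succ_one_eq_two,
      IsEmpty.exists_iff, or_false]
    tauto
  rw [h, Algebra.adjoin_image, FreeAlgebra.adjoin_range_ι, Algebra.map_top, AlgHom.range_eq_top]
  exact RingQuot.mkAlgHom_surjective ℚ RRCArel

theorem span_monomials : Submodule.span ℚ (Set.range (monomials x y s)) = ⊤ :=
  satisfiesRelations.span_monomials adjoin_generators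

section Lift

variable {R : Type*} [Ring R] [Algebra ℚ R] {a b c : R}

noncomputable def lift (h : SatisfiesRelations a b c) : RRCA →ₐ[ℚ] R :=
  RingQuot.liftAlgHom ℚ ⟨FreeAlgebra.lift ℚ ![b, c, a], fun _ _ hr => by
    cases hr <;> simp [h.s_mul_s, h.s_mul_x, h.s_mul_y, h.y_mul_x, h.x_mul_x, h.y_mul_y]⟩

theorem lift_x (h : SatisfiesRelations a b c) : lift h x = a := by simp [lift, x]
theorem lift_y (h : SatisfiesRelations a b c) : lift h y = b := by simp [lift, y]
theorem lift_s (h : SatisfiesRelations a b c) : lift h s = c := by simp [lift, s]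

end Lift

local notation "M₂" => Matrix (Fin 2) (Fin 2) ℚ

/- The two factors are the blocks of `A ≃ M₂(ℚ) × M₂(ℚ)` on which `z` acts as `1` and as `-1`: the
actions on the modules with basis `(x v, v)`, where `y v = 0` and `s v = -v`, resp. `s v = v`. -/
theorem satisfiesRelations_matrixPair :
    SatisfiesRelations ((!![0, 1; 0, 0], !![0, 1; 0, 0]) : M₂ × M₂)
      (!![0, 0; 2, 0], !![0, 0; -2, 0]) (!![1, 0; 0, -1], !![-1, 0; 0, 1]) := by
  constructor <;> ext i j <;> fin_cases i <;> fin_cases j <;> simp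

noncomputable def rep : RRCA →ₐ[ℚ] M₂ × M₂ := lift satisfiesRelations_matrixPair

theorem linearIndependent_rep_monomials :
    LinearIndependent ℚ (rep.toLinearMap ∘ monomials x y s) := by
  refine Fintype.linearIndependent_iff.2 fun c hc => ?_
  obtain ⟨⟨⟨h₁, h₂⟩, h₃, h₄⟩, ⟨h₅, h₆⟩, h₇, h₈⟩ :
      ((c 0 + c 1 + 2 * c 6 + 2 * c 7 = 0 ∧ c 4 - c 5 = 0) ∧
        2 * c 2 + 2 * c 3 = 0 ∧ c 0 - c 1 = 0) ∧
      (c 0 - c 1 - 2 * c 6 + 2 * c 7 = 0 ∧ c 4 + c 5 = 0) ∧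
        -(2 * c 2) + 2 * c 3 = 0 ∧ c 0 + c 1 = 0 := by
    simpa [monomials, Fin.sum_univ_eight, rep, lift_x, lift_y, lift_s, Prod.ext_iff,
      ← Matrix.ext_iff, Fin.forall_fin_two, sub_eq_add_neg, mul_comm] using hc
  intro i
  fin_cases i <;> dsimp <;> linarith

theorem rep_injective : Function.Injective rep :=
  rep.toLinearMap.injective_of_linearIndependent_comp span_monomials
    linearIndependent_rep_monomials

noncomputable def monomialBasis : Module.Basis (Fin 8) ℚ RRCA :=
  .mk (linearIndependent_rep_monomials.of_comp rep.toLinearMap) span_monomials.ge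

theorem rep_bijective : Function.Bijective rep := by
  have : FiniteDimensional ℚ RRCA := .of_basis monomialBasis
  refine ⟨rep_injective, (LinearMap.injective_iff_surjective_of_finrank_eq_finrank
    (f := rep.toLinearMap) ?_).1 rep_injective⟩
  simp [Module.finrank_eq_card_basis monomialBasis, Module.finrank_prod, Module.finrank_matrix]

noncomputable def scalarPair : ℚ × ℚ →+* M₂ × M₂ :=
  (Matrix.scalar (Fin 2)).prodMap (Matrix.scalar (Fin 2))

theorem scalarPair_injective : Function.Injective scalarPair := fun p q h => by
  simpa [scalarPair, Prod.ext_iff, Matrix.scalar_inj] using h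

theorem mem_center_iff_rep {w : RRCA} : w ∈ Set.center RRCA ↔ ∃ p, rep w = scalarPair p := by
  rw [← MulEquivClass.apply_mem_center_iff (AlgEquiv.ofBijective rep rep_bijective),
    Matrix.mem_center_prod_iff]
  simp [scalarPair]

theorem RRCAz_eq : RRCAz = x * y - s := by
  rw [RRCAz, map_sub, map_mul]
  rfl

theorem rep_RRCAz : rep RRCAz = (1, -1) := by
  rw [RRCAz_eq, map_sub, map_mul, rep, lift_x, lift_y, lift_s]
  ext i j <;> fin_cases i <;> fin_cases j <;> norm_num

theorem rep_algebraMap_add_smul_RRCAz (α β : ℚ) :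
    rep (algebraMap ℚ RRCA α + β • RRCAz) = scalarPair (α + β, α - β) := by
  rw [map_add, map_smul, AlgHom.commutes, rep_RRCAz, scalarPair, RingHom.coe_prodMap]
  ext i j <;> fin_cases i <;> fin_cases j <;> simp [Matrix.algebraMap_eq_diagonal] <;> ring

theorem mem_center_iff {w : RRCA} :
    w ∈ Set.center RRCA ↔ ∃ α β : ℚ, w = algebraMap ℚ RRCA α + β • RRCAz := by
  rw [mem_center_iff_rep]
  constructor
  · rintro ⟨⟨a, b⟩, h⟩
    refine ⟨(a + b) / 2, (a - b) / 2, rep_injective ?_⟩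
    rw [h, rep_algebraMap_add_smul_RRCAz]
    congr 1
    ext <;> ring
  · rintro ⟨α, β, rfl⟩
    exact ⟨_, rep_algebraMap_add_smul_RRCAz α β⟩

theorem pow_eq_iff_of_rep_eq {w c : RRCA} {p q : ℚ × ℚ} (hw : rep w = scalarPair p)
    (hc : rep c = scalarPair q) (n : ℕ) : w ^ n = c ↔ p ^ n = q := by
  rw [← rep_injective.eq_iff, map_pow, hw, hc, ← map_pow, scalarPair_injective.eq_iff]

end RRCA

theorem rrca_center :
    (∀ w : RRCA, w ∈ Set.center RRCA ↔
      ∃ α β : ℚ, w = algebraMap ℚ RRCA α + β • RRCAz) ∧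
    (∀ w ∈ Set.center RRCA, w ^ 2 ≠ -1) ∧
    (∀ w ∈ Set.center RRCA, w ^ 4 = 1 → w ^ 2 = 1) := by
  refine ⟨fun w => RRCA.mem_center_iff, fun w hw => ?_, fun w hw => ?_⟩
  all_goals obtain ⟨p, hp⟩ := RRCA.mem_center_iff_rep.1 hw
  · have hneg : RRCA.rep (-1) = RRCA.scalarPair (-1) := by rw [map_neg, map_one, map_neg, map_one]
    rw [Ne, RRCA.pow_eq_iff_of_rep_eq hp hneg]
    intro h
    have h₁ : p.1 ^ 2 = -1 := by simpa using congrArg Prod.fst h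
    linarith [sq_nonneg p.1]
  · have hone : RRCA.rep 1 = RRCA.scalarPair 1 := by rw [map_one, map_one]
    rw [RRCA.pow_eq_iff_of_rep_eq hp hone, RRCA.pow_eq_iff_of_rep_eq hp hone]
    intro h
    ext
    · exact sq_eq_one_of_pow_four_eq_one (by simpa using congrArg Prod.fst h)
    · exact sq_eq_one_of_pow_four_eq_one (by simpa using congrArg Prod.snd h)
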